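/- (Polynomial systems as Leontief market equilibria.) Let F be a bounded polynomial system in variables z_1, …, z_n. Then there exists an exchange market M, in which every agent has a Leontief utility function, whose set of goods includes n + 1 distinguished goods G_1, …, G_n and G_s, such that: (i) every equilibrium (p, (x_i)) of M satisfies p_s > 0; and (ii) the set { (p_1, …, p_n) : p is an equilibrium price vector of M normalized so that p_s = 1 } is exactly the set of solutions of F. In particular, M admits an equilibrium if and only if F admits a solution. -/

import Mathlib

open Finset

/-- The Leontief utility function with coefficient vector `A`:
`U(y) = min over {j : A j > 0} of y j / A j` (as the infimum of this finite set). -/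
noncomputable def leontief {G : Type*} (A : G → ℝ) (y : G → ℝ) : ℝ :=
  sInf {t : ℝ | ∃ j, 0 < A j ∧ t = y j / A j}

/-- `x` is an optimal bundle at prices `p` for an agent with budget `budget`
and utility function `U`. -/
def IsOptimalBundle {G : Type*} [Fintype G] (p : G → ℝ) (budget : ℝ)
    (U : (G → ℝ) → ℝ) (x : G → ℝ) : Prop :=
  (∀ j, 0 ≤ x j) ∧ (∑ j, p j * x j ≤ budget) ∧
    ∀ y : G → ℝ, (∀ j, 0 ≤ y j) → (∑ j, p j * y j ≤ budget) → U y ≤ U x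

/-- Equilibrium of an exchange market given by endowments `W` and utilities `U`:
prices are nonnegative, every agent gets an optimal affordable bundle, no good
is over-demanded, and positively priced goods clear exactly. -/
def IsEquilibrium {ι G : Type*} [Fintype ι] [Fintype G]
    (W : ι → G → ℝ) (U : ι → (G → ℝ) → ℝ) (p : G → ℝ) (x : ι → G → ℝ) : Prop :=
  (∀ j, 0 ≤ p j) ∧
  (∀ i, IsOptimalBundle p (∑ j, p j * W i j) (U i) (x i)) ∧
  (∀ j, ∑ i, x i j ≤ ∑ i, W i j) ∧
  (∀ j, 0 < p j → ∑ i, x i j = ∑ i, W i j)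

/-- Good `r` is exclusive to the set `S` of agents: every agent outside `S` has
no endowment of `r` and a utility function not depending on the `r`-coordinate. -/
def ExclusiveGood {ι G : Type*} (W : ι → G → ℝ) (U : ι → (G → ℝ) → ℝ)
    (r : G) (S : Set ι) : Prop :=
  ∀ i ∉ S, W i r = 0 ∧ ∀ y y' : G → ℝ, (∀ j, j ≠ r → y j = y' j) → U i y = U i y'

/-!
A Leontief agent with coefficients `A` spends its budget `p ⬝ᵥ W` on `(p ⬝ᵥ W / p ⬝ᵥ A) • A`, so
the equilibrium prices are the prices at which every bundle `A` has positive cost and these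
demands clear the market. The market is built from gadgets, each owning private goods whose
clearing forces a relation between the prices of shared goods: a linear gadget forces
`p ⬝ᵥ a = p ⬝ᵥ b`, a geometric-mean gadget forces `p c ^ 2 = p a * p b`. With `s` the numeraire,
two geometric means through the same `c` give `p (mon α) * p s = p (mon β) * p (shifted j)` for
`α = β + e_j` (and `p (mon 0) * p s = p s * p s`); by induction every monomial good costs
`∏ j, (z j + 1) ^ α j * p s` with `z j = p (var j) / p s`, and linear gadgets impose
`L ≤ z ≤ U` and `f i z = 0` written in these shifted monomials. Conversely, at the prices built
from a solution every gadget is exactly balanced.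
-/

section Leontief

variable {G : Type*} [Fintype G] {p A x y : G → ℝ} {B t : ℝ}

theorem le_leontief_iff (hA : ∃ j, 0 < A j) :
    t ≤ leontief A y ↔ ∀ j, 0 < A j → t * A j ≤ y j := by
  have hfin : {t : ℝ | ∃ j, 0 < A j ∧ t = y j / A j}.Finite := by
    refine (Set.finite_range fun j : {j // 0 < A j} => y j / A j).subset ?_
    rintro _ ⟨j, hj, rfl⟩
    exact ⟨⟨j, hj⟩, rfl⟩
  obtain ⟨j₀, hj₀⟩ := hA
  rw [leontief, le_csInf_iff hfin.bddBelow ⟨_, j₀, hj₀, rfl⟩]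
  refine ⟨fun h j hj => (le_div_iff₀ hj).1 (h _ ⟨j, hj, rfl⟩), ?_⟩
  rintro h _ ⟨j, hj, rfl⟩
  exact (le_div_iff₀ hj).2 (h j hj)

theorem leontief_mul_le (hA : ∃ j, 0 < A j) {j : G} (hj : 0 < A j) :
    leontief A y * A j ≤ y j :=
  (le_leontief_iff hA).1 le_rfl j hj

theorem leontief_smul_self (hA : ∃ j, 0 < A j) (t : ℝ) : leontief A (t • A) = t := by
  refine le_antisymm ?_ ((le_leontief_iff hA).2 fun j _ => le_rfl)
  obtain ⟨j, hj⟩ := hA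
  simpa [mul_le_mul_iff_left₀ hj] using leontief_mul_le ⟨j, hj⟩ hj (y := t • A)

theorem mul_le_of_le_leontief (hA : ∀ j, 0 ≤ A j) (hA0 : ∃ j, 0 < A j) (hy : ∀ j, 0 ≤ y j)
    (ht : t ≤ leontief A y) (j : G) : t * A j ≤ y j := by
  rcases (hA j).lt_or_eq with hj | hj
  · exact (mul_le_mul_of_nonneg_right ht (hA j)).trans (leontief_mul_le hA0 hj)
  · simpa [← hj] using hy j

theorem isOptimalBundle_iff {U : (G → ℝ) → ℝ} : IsOptimalBundle p B U x ↔
    (∀ j, 0 ≤ x j) ∧ p ⬝ᵥ x ≤ B ∧ ∀ y, (∀ j, 0 ≤ y j) → p ⬝ᵥ y ≤ B → U y ≤ U x :=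
  Iff.rfl

theorem not_isOptimalBundle_leontief (hA : ∀ j, 0 ≤ A j) (hA0 : ∃ j, 0 < A j)
    (hpA : p ⬝ᵥ A = 0) : ¬ IsOptimalBundle p B (leontief A) x := by
  intro h
  obtain ⟨hx, hxB, hopt⟩ := isOptimalBundle_iff.1 h
  have hle := hopt (x + A) (fun j => add_nonneg (hx j) (hA j))
    (by rwa [dotProduct_add, hpA, add_zero])
  have : leontief A x + 1 ≤ leontief A (x + A) := by
    refine (le_leontief_iff hA0).2 fun j hj => ?_
    have := leontief_mul_le (y := x) hA0 hj
    simp only [Pi.add_apply]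
    linarith
  linarith

theorem isOptimalBundle_leontief_smul (hp : ∀ j, 0 ≤ p j) (hA : ∀ j, 0 ≤ A j)
    (hA0 : ∃ j, 0 < A j) (hpA : 0 < p ⬝ᵥ A) (hB : 0 ≤ B) :
    IsOptimalBundle p B (leontief A) ((B / p ⬝ᵥ A) • A) := by
  have hcost : p ⬝ᵥ ((B / p ⬝ᵥ A) • A) = B := by
    rw [dotProduct_smul, smul_eq_mul, div_mul_cancel₀ _ hpA.ne']
  refine isOptimalBundle_iff.2
    ⟨fun j => mul_nonneg (div_nonneg hB hpA.le) (hA j), hcost.le, fun y hy hyB => ?_⟩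
  rw [leontief_smul_self hA0]
  have hy' : p ⬝ᵥ (leontief A y • A) ≤ p ⬝ᵥ y :=
    Finset.sum_le_sum fun j _ =>
      mul_le_mul_of_nonneg_left (mul_le_of_le_leontief hA hA0 hy le_rfl j) (hp j)
  rw [dotProduct_smul, smul_eq_mul] at hy'
  rw [le_div_iff₀ hpA]
  linarith

theorem IsOptimalBundle.smul_le (hx : IsOptimalBundle p B (leontief A) x) (hp : ∀ j, 0 ≤ p j)
    (hA : ∀ j, 0 ≤ A j) (hA0 : ∃ j, 0 < A j) (hpA : 0 < p ⬝ᵥ A) (j : G) :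
    (B / p ⬝ᵥ A) * A j ≤ x j := by
  obtain ⟨hx0, hxB, hopt⟩ := isOptimalBundle_iff.1 hx
  have hB : 0 ≤ B := (Finset.sum_nonneg fun j _ => mul_nonneg (hp j) (hx0 j)).trans hxB
  have hbundle := isOptimalBundle_leontief_smul hp hA hA0 hpA hB
  have := hopt _ hbundle.1 hbundle.2.1
  rw [leontief_smul_self hA0] at this
  exact mul_le_of_le_leontief hA hA0 hx0 this j

theorem IsOptimalBundle.eq_of_pos (hx : IsOptimalBundle p B (leontief A) x)
    (hp : ∀ j, 0 ≤ p j) (hA : ∀ j, 0 ≤ A j) (hA0 : ∃ j, 0 < A j) (hpA : 0 < p ⬝ᵥ A) {j : G}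
    (hj : 0 < p j) : x j = (B / p ⬝ᵥ A) * A j := by
  have hterm : ∀ k, 0 ≤ p k * (x - (B / p ⬝ᵥ A) • A) k := fun k =>
    mul_nonneg (hp k) (sub_nonneg.2 (hx.smul_le hp hA hA0 hpA k))
  have hsum : p ⬝ᵥ (x - (B / p ⬝ᵥ A) • A) = 0 := by
    refine le_antisymm ?_ (Finset.sum_nonneg fun k _ => hterm k)
    rw [dotProduct_sub, dotProduct_smul, smul_eq_mul, div_mul_cancel₀ _ hpA.ne']
    exact sub_nonpos.2 (isOptimalBundle_iff.1 hx).2.1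
  have := (Finset.sum_eq_zero_iff_of_nonneg fun k _ => hterm k).1 hsum j (Finset.mem_univ j)
  rcases mul_eq_zero.1 this with h | h
  · exact absurd h hj.ne'
  · simpa [sub_eq_zero] using h

end Leontief

structure LeontiefAgent (G : Type*) where
  endowment : G → ℝ
  coeff : G → ℝ

noncomputable def LeontiefAgent.level {G : Type*} [Fintype G] (a : LeontiefAgent G)
    (p : G → ℝ) : ℝ :=
  p ⬝ᵥ a.endowment / p ⬝ᵥ a.coeff

section Market

variable {ι G : Type*} [Fintype ι] [Fintype G] (M : ι → LeontiefAgent G) (p : G → ℝ)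

noncomputable def excessDemand : G → ℝ :=
  ∑ i, ((M i).level p • (M i).coeff - (M i).endowment)

theorem excessDemand_apply (g : G) :
    excessDemand M p g = ∑ i, ((M i).level p * (M i).coeff g - (M i).endowment g) := by
  simp [excessDemand]

structure IsLeontiefEquilibriumPrice : Prop where
  nonneg : ∀ g, 0 ≤ p g
  coeff_pos : ∀ i, 0 < p ⬝ᵥ (M i).coeff
  excessDemand_nonpos : ∀ g, excessDemand M p g ≤ 0
  excessDemand_eq_zero : ∀ g, 0 < p g → excessDemand M p g = 0

variable {M p}

theorem IsEquilibrium.isLeontiefEquilibriumPrice (hA : ∀ i g, 0 ≤ (M i).coeff g)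
    (hA0 : ∀ i, ∃ g, 0 < (M i).coeff g) {x : ι → G → ℝ}
    (h : IsEquilibrium (fun i => (M i).endowment) (fun i => leontief (M i).coeff) p x) :
    IsLeontiefEquilibriumPrice M p := by
  obtain ⟨hp, hopt, hsupply, hclear⟩ := h
  have hpos : ∀ i, 0 < p ⬝ᵥ (M i).coeff := fun i =>
    (Finset.sum_nonneg fun g _ => mul_nonneg (hp g) (hA i g)).lt_of_ne' fun h0 =>
      not_isOptimalBundle_leontief (hA i) (hA0 i) h0 (hopt i)
  refine ⟨hp, hpos, fun g => ?_, fun g hg => ?_⟩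
  · rw [excessDemand_apply, Finset.sum_sub_distrib, sub_nonpos]
    exact (Finset.sum_le_sum fun i _ =>
      (hopt i).smul_le hp (hA i) (hA0 i) (hpos i) g).trans (hsupply g)
  · rw [excessDemand_apply, Finset.sum_sub_distrib, sub_eq_zero, ← hclear g hg]
    exact Finset.sum_congr rfl fun i _ =>
      ((hopt i).eq_of_pos hp (hA i) (hA0 i) (hpos i) hg).symm

theorem IsLeontiefEquilibriumPrice.isEquilibrium (hp : IsLeontiefEquilibriumPrice M p)
    (hW : ∀ i g, 0 ≤ (M i).endowment g) (hA : ∀ i g, 0 ≤ (M i).coeff g)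
    (hA0 : ∀ i, ∃ g, 0 < (M i).coeff g) :
    IsEquilibrium (fun i => (M i).endowment) (fun i => leontief (M i).coeff) p
      (fun i => (M i).level p • (M i).coeff) := by
  refine ⟨hp.nonneg, fun i => isOptimalBundle_leontief_smul hp.nonneg (hA i) (hA0 i)
    (hp.coeff_pos i) (Finset.sum_nonneg fun g _ => mul_nonneg (hp.nonneg g) (hW i g)),
    fun g => ?_, fun g hg => ?_⟩
  · have := hp.excessDemand_nonpos g
    rw [excessDemand_apply, Finset.sum_sub_distrib, sub_nonpos] at this
    simpa using this
  · have := hp.excessDemand_eq_zero g hg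
    rw [excessDemand_apply, Finset.sum_sub_distrib, sub_eq_zero] at this
    simpa using this

end Market

section Gadgets

variable {G : Type*} [DecidableEq G]

/-- Clearing the private good `q r` bounds the level of agent `r` by one; the two levels are
`(p ⬝ᵥ a + p (q 0)) / (p ⬝ᵥ b + p (q 0))` and `(p ⬝ᵥ b + p (q 1)) / (p ⬝ᵥ a + p (q 1))`. -/
noncomputable def linearGadget (a b : G → ℝ) (q : Fin 2 → G) : Fin 2 → LeontiefAgent G :=
  ![⟨a + Pi.single (q 0) 1, b + Pi.single (q 0) 1⟩, ⟨b + Pi.single (q 1) 1, a + Pi.single (q 1) 1⟩]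

/-- The goods `d` and `q` are private, and clearing `q` forces `p d = p c`. Then agents `0` and
`1` demand `p a / (p c + p a) + p b / (p c + p b)` units of `c`, and this is `1` exactly when
`p c ^ 2 = p a * p b`; agents `2` and `3` return the complementary amount through `d`. -/
noncomputable def geomMeanGadget (a b c d q : G) : Fin 6 → LeontiefAgent G :=
  ![⟨Pi.single a 1, Pi.single c 1 + Pi.single a 1⟩,
    ⟨Pi.single b 1, Pi.single c 1 + Pi.single b 1⟩,
    ⟨Pi.single c 1, Pi.single d 1 + Pi.single a 1⟩,
    ⟨Pi.single c 1, Pi.single d 1 + Pi.single b 1⟩,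
    ⟨Pi.single d 1 + Pi.single q 1, Pi.single c 1 + Pi.single q 1⟩,
    ⟨Pi.single q 1, Pi.single q 1⟩]

theorem single_one_nonneg (g g' : G) : 0 ≤ (Pi.single g 1 : G → ℝ) g' := by
  rw [Pi.single_apply]; split_ifs <;> norm_num

variable {a b : G → ℝ} {q : Fin 2 → G}

theorem linearGadget_nonneg (ha : ∀ g, 0 ≤ a g) (hb : ∀ g, 0 ≤ b g) (r : Fin 2) (g : G) :
    0 ≤ (linearGadget a b q r).endowment g ∧ 0 ≤ (linearGadget a b q r).coeff g := by
  fin_cases r <;> simp [linearGadget, add_nonneg, ha, hb, single_one_nonneg]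

theorem linearGadget_coeff_pos (ha : ∀ g, 0 ≤ a g) (hb : ∀ g, 0 ≤ b g) (r : Fin 2) :
    0 < (linearGadget a b q r).coeff (q r) := by
  fin_cases r <;> simp [linearGadget] <;> linarith [ha (q 1), hb (q 0)]

theorem geomMeanGadget_nonneg (a b c d q : G) (k : Fin 6) (g : G) :
    0 ≤ (geomMeanGadget a b c d q k).endowment g ∧ 0 ≤ (geomMeanGadget a b c d q k).coeff g := by
  fin_cases k <;> simp [geomMeanGadget, add_nonneg, single_one_nonneg]

theorem geomMeanGadget_exists_coeff_pos (a b c d q : G) (k : Fin 6) :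
    ∃ g, 0 < (geomMeanGadget a b c d q k).coeff g := by
  fin_cases k
  all_goals first
    | exact ⟨c, by simp [geomMeanGadget]; linarith [single_one_nonneg a c, single_one_nonneg b c,
        single_one_nonneg q c]⟩
    | exact ⟨d, by simp [geomMeanGadget]; linarith [single_one_nonneg a d, single_one_nonneg b d]⟩
    | exact ⟨q, by simp [geomMeanGadget]⟩

variable [Fintype G] {p : G → ℝ}

theorem linearGadget_excessDemand (a b : G → ℝ) (q : Fin 2 → G) (p : G → ℝ) :
    excessDemand (linearGadget a b q) p =
      ((linearGadget a b q 1).level p - 1) • a + ((linearGadget a b q 0).level p - 1) • b +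
        ∑ r, ((linearGadget a b q r).level p - 1) • Pi.single (q r) 1 := by
  simp only [excessDemand, Fin.sum_univ_two, linearGadget, Matrix.cons_val_zero,
    Matrix.cons_val_one]
  module

theorem linearGadget_dotProduct_coeff_pos (hp : ∀ g, 0 ≤ p g) (ha : ∀ g, 0 ≤ a g)
    (hb : ∀ g, 0 ≤ b g) (hq : ∀ r, 0 < p (q r)) (r : Fin 2) :
    0 < p ⬝ᵥ (linearGadget a b q r).coeff := by
  have hpa : 0 ≤ p ⬝ᵥ a := Finset.sum_nonneg fun g _ => mul_nonneg (hp g) (ha g)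
  have hpb : 0 ≤ p ⬝ᵥ b := Finset.sum_nonneg fun g _ => mul_nonneg (hp g) (hb g)
  fin_cases r <;> simp [linearGadget, dotProduct_add] <;> linarith [hq 0, hq 1]

theorem linearGadget_dotProduct_eq (hpos : ∀ r, 0 < p ⬝ᵥ (linearGadget a b q r).coeff)
    (hle : ∀ r, (linearGadget a b q r).level p ≤ 1) : p ⬝ᵥ a = p ⬝ᵥ b := by
  have h0 := (div_le_one (hpos 0)).1 (hle 0)
  have h1 := (div_le_one (hpos 1)).1 (hle 1)
  simp only [linearGadget, Matrix.cons_val_zero, Matrix.cons_val_one, dotProduct_add] at h0 h1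
  linarith

theorem linearGadget_excessDemand_eq_zero (hpos : ∀ r, 0 < p ⬝ᵥ (linearGadget a b q r).coeff)
    (h : p ⬝ᵥ a = p ⬝ᵥ b) : excessDemand (linearGadget a b q) p = 0 := by
  have hlevel : ∀ r, (linearGadget a b q r).level p = 1 := fun r => by
    refine (div_eq_one_iff_eq (hpos r).ne').2 ?_
    fin_cases r <;> simp [linearGadget, dotProduct_add, h]
  simp [linearGadget_excessDemand, hlevel]

variable {a b c d q : G}

theorem geomMeanGadget_excessDemand (a b c d q : G) (p : G → ℝ) :
    let t := fun k => (geomMeanGadget a b c d q k).level p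
    excessDemand (geomMeanGadget a b c d q) p =
      (t 0 + t 2 - 1) • Pi.single a 1 + (t 1 + t 3 - 1) • Pi.single b 1 +
      (t 0 + t 1 + t 4 - 2) • Pi.single c 1 + (t 2 + t 3 - 1) • Pi.single d 1 +
      (t 4 + t 5 - 2) • Pi.single q 1 := by
  simp only [excessDemand, Fin.sum_univ_six, geomMeanGadget, Matrix.cons_val_zero,
    Matrix.cons_val_one, Matrix.cons_val]
  module

theorem geomMeanGadget_dotProduct_coeff_pos (hp : ∀ g, 0 ≤ p g) (hc : 0 < p c) (hd : 0 < p d)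
    (hq : 0 < p q) (k : Fin 6) : 0 < p ⬝ᵥ (geomMeanGadget a b c d q k).coeff := by
  fin_cases k <;> simp [geomMeanGadget, dotProduct_add] <;> linarith [hp a, hp b]

noncomputable def geomMeanDefect (p : G → ℝ) (a b c : G) : ℝ :=
  (p a * p b - p c ^ 2) / ((p c + p a) * (p c + p b))

theorem geomMeanGadget_link_eq (hq : 0 < p q) (hcq : 0 < p c + p q)
    (h : (geomMeanGadget a b c d q 4).level p + (geomMeanGadget a b c d q 5).level p - 2 = 0) :
    p d = p c := by
  simp only [geomMeanGadget, LeontiefAgent.level, Matrix.cons_val, dotProduct_add,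
    dotProduct_single, mul_one, div_self hq.ne'] at h
  field_simp at h
  linarith

theorem geomMeanGadget_levels (hc : 0 ≤ p c) (hq : 0 < p q) (hd : p d = p c)
    (ha : 0 < p c + p a) (hb : 0 < p c + p b) :
    let t := fun k => (geomMeanGadget a b c d q k).level p
    t 0 + t 2 - 1 = 0 ∧ t 1 + t 3 - 1 = 0 ∧ t 4 + t 5 - 2 = 0 ∧
      t 0 + t 1 + t 4 - 2 = geomMeanDefect p a b c ∧
      t 2 + t 3 - 1 = -geomMeanDefect p a b c := by
  have hcq : 0 < p c + p q := by linarith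
  simp only [geomMeanGadget, LeontiefAgent.level, Matrix.cons_val_zero, Matrix.cons_val_one,
    Matrix.cons_val, dotProduct_add, dotProduct_single, mul_one, hd, geomMeanDefect,
    div_self hcq.ne', div_self hq.ne']
  refine ⟨?_, ?_, by norm_num, ?_, ?_⟩ <;> field_simp <;> ring

theorem geomMeanGadget_excessDemand_eq_zero (hc : 0 ≤ p c) (hq : 0 < p q) (hd : p d = p c)
    (ha : 0 < p c + p a) (hb : 0 < p c + p b) (hsq : p a * p b = p c ^ 2) :
    excessDemand (geomMeanGadget a b c d q) p = 0 := by
  obtain ⟨h02, h13, h45, h014, h23⟩ := geomMeanGadget_levels (a := a) (b := b) hc hq hd ha hb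
  rw [geomMeanDefect, hsq, sub_self, zero_div] at h014 h23
  rw [geomMeanGadget_excessDemand]
  dsimp only at h02 h13 h45 h014 h23 ⊢
  rw [h02, h13, h45, h014, h23]
  simp

end Gadgets

namespace PolyMarket

open MvPolynomial

inductive Constraint (n m : ℕ)
  | shift (j : Fin n)
  | lower (j : Fin n)
  | upper (j : Fin n)
  | poly (i : Fin m)
  deriving DecidableEq, Fintype

inductive Good (n m : ℕ) (M : Type)
  | numeraire
  | var (j : Fin n)
  | slackLower (j : Fin n)
  | slackUpper (j : Fin n)
  | shifted (j : Fin n)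
  | mon (α : M)
  | pad (c : Constraint n m) (r : Fin 2)
  | root (α : M)
  | link (α : M) (r : Fin 2)
  | keep (α : M) (r : Fin 2)
  deriving DecidableEq, Fintype

open Good

def Good.IsPublic {n m : ℕ} {M : Type} : Good n m M → Prop
  | pad .. | root .. | link .. | keep .. => False
  | _ => True

def IsBoundedSolution {m n : ℕ} (f : Fin m → MvPolynomial (Fin n) ℚ) (L U : Fin n → ℚ)
    (z : Fin n → ℝ) : Prop :=
  (∀ i, aeval z (f i) = 0) ∧ ∀ j, (L j : ℝ) ≤ z j ∧ z j ≤ (U j : ℝ)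

section Monomials

variable {m n : ℕ}

noncomputable def monomialEval (y : Fin n → ℝ) (α : Fin n →₀ ℕ) : ℝ := ∏ j, y j ^ α j

theorem monomialEval_add_single (y : Fin n → ℝ) (α : Fin n →₀ ℕ) (j : Fin n) :
    monomialEval y (α + Finsupp.single j 1) = monomialEval y α * y j := by
  simp only [monomialEval, Finsupp.add_apply, pow_add, Finset.prod_mul_distrib,
    Finsupp.single_apply]
  congr 1
  simp [pow_ite]

theorem monomialEval_shift_pos {z : Fin n → ℝ} (hz : ∀ j, 0 ≤ z j) (α : Fin n →₀ ℕ) :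
    0 < monomialEval (fun j => z j + 1) α :=
  Finset.prod_pos fun j _ => pow_pos (by linarith [hz j]) _

theorem exists_single_one_le {α : Fin n →₀ ℕ} (h : α ≠ 0) : ∃ j, Finsupp.single j 1 ≤ α := by
  obtain ⟨j, hj⟩ := Finsupp.ne_iff.1 h
  exact ⟨j, Finsupp.single_le_iff.2 (Nat.one_le_iff_ne_zero.2 hj)⟩

variable (f : Fin m → MvPolynomial (Fin n) ℚ)

/-- Monomial goods are priced at `∏ j, (z j + 1) ^ α j`, which stays positive for `z ≥ 0`, so the
polynomials are re-expanded around `-1`. -/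
noncomputable def shiftedPoly (i : Fin m) : MvPolynomial (Fin n) ℚ :=
  aeval (fun j => X j - 1) (f i)

noncomputable def degBound : Fin n →₀ ℕ :=
  univ.sup fun i => (shiftedPoly f i).support.sup id

abbrev Monomial := ↥(Finset.Iic (degBound f))

abbrev Goods := Good n m (Monomial f)

noncomputable def polyCoeff (i : Fin m) (α : Monomial f) : ℝ :=
  ((shiftedPoly f i).coeff α : ℚ)

theorem sum_polyCoeff_mul_monomialEval (z : Fin n → ℝ) (i : Fin m) :
    ∑ α : Monomial f, polyCoeff f i α * monomialEval (fun j => z j + 1) α = aeval z (f i) := by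
  have hshift : aeval z (f i) = aeval (fun j => z j + 1) (shiftedPoly f i) := by
    rw [shiftedPoly, comp_aeval_apply]
    simp
  have hsupp : (shiftedPoly f i).support ⊆ Finset.Iic (degBound f) := fun α hα =>
    Finset.mem_Iic.2 ((Finset.le_sup (f := id) hα).trans
      (Finset.le_sup (f := fun i => (shiftedPoly f i).support.sup id) (Finset.mem_univ i)))
  rw [hshift, aeval_def, eval₂_eq', Finset.sum_subset hsupp fun α _ hα => by
    simp [notMem_support_iff.1 hα]]
  exact Finset.sum_coe_sort (Finset.Iic (degBound f))
    (fun α => (((shiftedPoly f i).coeff α : ℚ) : ℝ) * monomialEval (fun j => z j + 1) α)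

variable {f}

noncomputable def monFactors (α : Monomial f) : Goods f × Goods f :=
  if h : (α : Fin n →₀ ℕ) = 0 then (numeraire, numeraire)
  else
    (mon ⟨(α : Fin n →₀ ℕ) - Finsupp.single (exists_single_one_le h).choose 1,
      Finset.mem_Iic.2 (tsub_le_self.trans (Finset.mem_Iic.1 α.2))⟩,
      shifted (exists_single_one_le h).choose)

theorem monFactors_price_mul {P : Goods f → ℝ} {y : Fin n → ℝ} {s : ℝ} (α : Monomial f)
    (hmon : ∀ β < α, P (mon β) = monomialEval y β * s) (hshift : ∀ j, P (shifted j) = y j * s)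
    (hnum : P numeraire = s) :
    P (monFactors α).1 * P (monFactors α).2 = monomialEval y α * s ^ 2 := by
  unfold monFactors
  split_ifs with h
  · simp [h, monomialEval, hnum, sq]
  · set j := (exists_single_one_le h).choose
    have hj : Finsupp.single j 1 ≤ (α : Fin n →₀ ℕ) := (exists_single_one_le h).choose_spec
    have hdecomp := tsub_add_cancel_of_le hj
    have hlt : (α : Fin n →₀ ℕ) - Finsupp.single j 1 < (α : Fin n →₀ ℕ) := by
      refine lt_of_le_of_ne tsub_le_self fun heq => ?_
      rw [heq] at hdecomp
      simp at hdecomp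
    have key : monomialEval y α =
        monomialEval y ((α : Fin n →₀ ℕ) - Finsupp.single j 1) * y j := by
      rw [← monomialEval_add_single, hdecomp]
    rw [hmon _ hlt, hshift, key]
    ring

noncomputable def geomMeanBase (α : Monomial f) : Fin 2 → Goods f × Goods f :=
  ![(mon α, numeraire), monFactors α]

theorem ne_geomMeanBase {g : Goods f} (hg : ¬ g.IsPublic) (α : Monomial f) (r : Fin 2) :
    g ≠ (geomMeanBase α r).1 ∧ g ≠ (geomMeanBase α r).2 := by
  have : (geomMeanBase α r).1.IsPublic ∧ (geomMeanBase α r).2.IsPublic := by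
    fin_cases r
    · simp [geomMeanBase, Good.IsPublic]
    · unfold geomMeanBase monFactors
      split_ifs <;> simp [Good.IsPublic]
  exact ⟨fun h => hg (h ▸ this.1), fun h => hg (h ▸ this.2)⟩

end Monomials

section Construction

variable {m n : ℕ} (f : Fin m → MvPolynomial (Fin n) ℚ) (L U : Fin n → ℚ)

noncomputable def lhs : Constraint n m → Goods f → ℝ
  | .shift j => Pi.single (shifted j) 1
  | .lower j => Pi.single (var j) 1
  | .upper j => Pi.single (var j) 1 + Pi.single (slackUpper j) 1
  | .poly i => ∑ α, (polyCoeff f i α)⁺ • Pi.single (mon α) 1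

noncomputable def rhs : Constraint n m → Goods f → ℝ
  | .shift j => Pi.single (var j) 1 + Pi.single numeraire 1
  | .lower j => (L j : ℝ) • Pi.single numeraire 1 + Pi.single (slackLower j) 1
  | .upper j => (U j : ℝ) • Pi.single numeraire 1
  | .poly i => ∑ α, (polyCoeff f i α)⁻ • Pi.single (mon α) 1

noncomputable def linearAgents (c : Constraint n m) : Fin 2 → LeontiefAgent (Goods f) :=
  linearGadget (lhs f c) (rhs f L U c) (pad c)

variable {f} in
noncomputable def geomMeanAgents (α : Monomial f) (r : Fin 2) :
    Fin 6 → LeontiefAgent (Goods f) :=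
  geomMeanGadget (geomMeanBase α r).1 (geomMeanBase α r).2 (root α) (link α r) (keep α r)

abbrev Trader := Unit ⊕ (Constraint n m × Fin 2) ⊕ (Monomial f × Fin 2 × Fin 6)

noncomputable def market : Trader f → LeontiefAgent (Goods f)
  | .inl _ => ⟨Pi.single numeraire 1, Pi.single numeraire 1⟩
  | .inr (.inl (c, r)) => linearAgents f L U c r
  | .inr (.inr (α, r, k)) => geomMeanAgents α r k

variable {f L U}

theorem lhs_nonneg (c : Constraint n m) (g : Goods f) : 0 ≤ lhs f c g := by
  cases c <;> simp [lhs, Finset.sum_apply, add_nonneg, single_one_nonneg, Finset.sum_nonneg,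
    mul_nonneg, posPart_nonneg]

theorem rhs_nonneg (hLU : ∀ j, 0 ≤ L j ∧ L j ≤ U j) (c : Constraint n m) (g : Goods f) :
    0 ≤ rhs f L U c g := by
  have hL j : (0 : ℝ) ≤ L j := by exact_mod_cast (hLU j).1
  have hU j : (0 : ℝ) ≤ U j := by exact_mod_cast (hLU j).1.trans (hLU j).2
  cases c <;> simp [rhs, Finset.sum_apply, add_nonneg, single_one_nonneg, Finset.sum_nonneg,
    mul_nonneg, negPart_nonneg, hL, hU]

theorem market_nonneg (hLU : ∀ j, 0 ≤ L j ∧ L j ≤ U j) (i : Trader f) (g : Goods f) :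
    0 ≤ (market f L U i).endowment g ∧ 0 ≤ (market f L U i).coeff g := by
  rcases i with _ | ⟨c, r⟩ | ⟨α, r, k⟩
  · exact ⟨single_one_nonneg _ _, single_one_nonneg _ _⟩
  · exact linearGadget_nonneg (lhs_nonneg c) (rhs_nonneg hLU c) r g
  · exact geomMeanGadget_nonneg _ _ _ _ _ k g

theorem market_exists_coeff_pos (hLU : ∀ j, 0 ≤ L j ∧ L j ≤ U j) (i : Trader f) :
    ∃ g, 0 < (market f L U i).coeff g := by
  rcases i with _ | ⟨c, r⟩ | ⟨α, r, k⟩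
  · exact ⟨numeraire, by simp [market]⟩
  · exact ⟨pad c r, linearGadget_coeff_pos (lhs_nonneg c) (rhs_nonneg hLU c) r⟩
  · exact geomMeanGadget_exists_coeff_pos _ _ _ _ _ k

theorem dotProduct_lhs_sub_rhs_poly (p : Goods f → ℝ) (i : Fin m) :
    p ⬝ᵥ lhs f (.poly i) - p ⬝ᵥ rhs f L U (.poly i) = ∑ α, polyCoeff f i α * p (mon α) := by
  simp only [lhs, rhs, dotProduct_sum, dotProduct_smul, dotProduct_single, mul_one, smul_eq_mul,
    ← Finset.sum_sub_distrib, ← sub_mul, posPart_sub_negPart]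

theorem lhs_apply_eq_zero {g : Goods f} (hg : ¬ g.IsPublic) (c : Constraint n m) :
    lhs f c g = 0 := by
  cases c <;> cases g <;> simp_all [lhs, Good.IsPublic]

theorem rhs_apply_eq_zero {g : Goods f} (hg : ¬ g.IsPublic) (c : Constraint n m) :
    rhs f L U c g = 0 := by
  cases c <;> cases g <;> simp_all [rhs, Good.IsPublic]

theorem excessDemand_market (p : Goods f → ℝ) :
    excessDemand (market f L U) p =
      (p numeraire / p numeraire - 1) • Pi.single numeraire 1 +
      ∑ c, excessDemand (linearAgents f L U c) p +
      ∑ α, ∑ r, excessDemand (geomMeanAgents α r) p := by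
  simp only [excessDemand, Fintype.sum_sum_type, Fintype.sum_prod_type, Finset.sum_const,
    Finset.card_univ, Fintype.card_unit, one_smul, market, LeontiefAgent.level, dotProduct_single,
    mul_one]
  rw [add_assoc]
  congr 1
  module

theorem excessDemand_market_pad (p : Goods f → ℝ) (c : Constraint n m) (r : Fin 2) :
    excessDemand (market f L U) p (pad c r) = (linearAgents f L U c r).level p - 1 := by
  have hg : ¬ (pad c r : Goods f).IsPublic := id
  simp [excessDemand_market, linearAgents, geomMeanAgents, linearGadget_excessDemand,
    geomMeanGadget_excessDemand, lhs_apply_eq_zero hg, rhs_apply_eq_zero hg, Pi.single_apply,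
    Finset.sum_apply, (ne_geomMeanBase hg _ _).1, (ne_geomMeanBase hg _ _).2, -Fin.sum_univ_two,
    ite_and]

theorem excessDemand_market_keep (p : Goods f → ℝ) (α : Monomial f) (r : Fin 2) :
    excessDemand (market f L U) p (keep α r) =
      (geomMeanAgents α r 4).level p + (geomMeanAgents α r 5).level p - 2 := by
  have hg : ¬ (keep α r : Goods f).IsPublic := id
  simp [excessDemand_market, linearAgents, geomMeanAgents, linearGadget_excessDemand,
    geomMeanGadget_excessDemand, lhs_apply_eq_zero hg, rhs_apply_eq_zero hg, Pi.single_apply,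
    Finset.sum_apply, (ne_geomMeanBase hg _ _).1, (ne_geomMeanBase hg _ _).2, -Fin.sum_univ_two,
    ite_and]

theorem excessDemand_market_link (p : Goods f → ℝ) (α : Monomial f) (r : Fin 2) :
    excessDemand (market f L U) p (link α r) =
      (geomMeanAgents α r 2).level p + (geomMeanAgents α r 3).level p - 1 := by
  have hg : ¬ (link α r : Goods f).IsPublic := id
  simp [excessDemand_market, linearAgents, geomMeanAgents, linearGadget_excessDemand,
    geomMeanGadget_excessDemand, lhs_apply_eq_zero hg, rhs_apply_eq_zero hg, Pi.single_apply,
    Finset.sum_apply, (ne_geomMeanBase hg _ _).1, (ne_geomMeanBase hg _ _).2, -Fin.sum_univ_two,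
    ite_and]

theorem excessDemand_market_root (p : Goods f → ℝ) (α : Monomial f) :
    excessDemand (market f L U) p (root α) =
      ∑ r, ((geomMeanAgents α r 0).level p + (geomMeanAgents α r 1).level p +
        (geomMeanAgents α r 4).level p - 2) := by
  have hg : ¬ (root α : Goods f).IsPublic := id
  simp [excessDemand_market, linearAgents, geomMeanAgents, linearGadget_excessDemand,
    geomMeanGadget_excessDemand, lhs_apply_eq_zero hg, rhs_apply_eq_zero hg, Pi.single_apply,
    Finset.sum_apply, (ne_geomMeanBase hg _ _).1, (ne_geomMeanBase hg _ _).2, -Fin.sum_univ_two]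

end Construction

section Equilibrium

variable {m n : ℕ} {f : Fin m → MvPolynomial (Fin n) ℚ} {L U : Fin n → ℚ} {p : Goods f → ℝ}

theorem numeraire_price_pos (hp : IsLeontiefEquilibriumPrice (market f L U) p) :
    0 < p numeraire := by
  simpa [market] using hp.coeff_pos (.inl ())

theorem dotProduct_lhs_eq_rhs (hp : IsLeontiefEquilibriumPrice (market f L U) p)
    (c : Constraint n m) : p ⬝ᵥ lhs f c = p ⬝ᵥ rhs f L U c :=
  linearGadget_dotProduct_eq (fun r => hp.coeff_pos (.inr (.inl (c, r)))) fun r => by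
    have := hp.excessDemand_nonpos (pad c r)
    rw [excessDemand_market_pad] at this
    exact sub_nonpos.1 this

theorem geomMeanBase_price_mul (hp : IsLeontiefEquilibriumPrice (market f L U) p)
    (α : Monomial f) (r : Fin 2) :
    p (geomMeanBase α r).1 * p (geomMeanBase α r).2 = p (root α) ^ 2 := by
  have hpos r k : 0 < p ⬝ᵥ (geomMeanAgents α r k).coeff := hp.coeff_pos (.inr (.inr (α, r, k)))
  have hq r : 0 < p (keep α r) := by simpa [geomMeanAgents, geomMeanGadget] using hpos r 5
  have hcq r : 0 < p (root α) + p (keep α r) := by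
    simpa [geomMeanAgents, geomMeanGadget, dotProduct_add] using hpos r 4
  have ha r : 0 < p (root α) + p (geomMeanBase α r).1 := by
    simpa [geomMeanAgents, geomMeanGadget, dotProduct_add] using hpos r 0
  have hb r : 0 < p (root α) + p (geomMeanBase α r).2 := by
    simpa [geomMeanAgents, geomMeanGadget, dotProduct_add] using hpos r 1
  have hd r : p (link α r) = p (root α) := geomMeanGadget_link_eq (hq r) (hcq r) <| by
    have := hp.excessDemand_eq_zero _ (hq r)
    rwa [excessDemand_market_keep] at this
  have hlev r := geomMeanGadget_levels (hp.nonneg _) (hq r) (hd r) (ha r) (hb r)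
  have hδ r : 0 ≤ geomMeanDefect p (geomMeanBase α r).1 (geomMeanBase α r).2 (root α) := by
    have := hp.excessDemand_nonpos (link α r)
    rw [excessDemand_market_link] at this
    simp only [geomMeanAgents] at this
    linarith [(hlev r).2.2.2.2]
  have hsum : ∑ r, geomMeanDefect p (geomMeanBase α r).1 (geomMeanBase α r).2 (root α) = 0 := by
    refine le_antisymm ?_ (Finset.sum_nonneg fun r _ => hδ r)
    have := hp.excessDemand_nonpos (root α)
    rw [excessDemand_market_root] at this
    simp only [geomMeanAgents] at this
    refine le_of_eq_of_le (Finset.sum_congr rfl fun r _ => ?_) this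
    linarith [(hlev r).2.2.2.1]
  have := (Finset.sum_eq_zero_iff_of_nonneg fun r _ => hδ r).1 hsum r (Finset.mem_univ r)
  rw [geomMeanDefect, div_eq_zero_iff, sub_eq_zero] at this
  exact this.resolve_right (mul_pos (ha r) (hb r)).ne'

theorem isBoundedSolution_of_isLeontiefEquilibriumPrice
    (hp : IsLeontiefEquilibriumPrice (market f L U) p) :
    IsBoundedSolution f L U fun j => p (var j) / p numeraire := by
  have hs := numeraire_price_pos hp
  set z : Fin n → ℝ := fun j => p (var j) / p numeraire
  have hvar j : p (var j) = z j * p numeraire := by simp [z, hs.ne']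
  have hlin := dotProduct_lhs_eq_rhs hp
  have hshift j : p (shifted j) = (z j + 1) * p numeraire := by
    have := hlin (.shift j)
    simp only [lhs, rhs, dotProduct_add, dotProduct_single, mul_one] at this
    rw [this, hvar]
    ring
  have hmon (α : Monomial f) : p (mon α) = monomialEval (fun j => z j + 1) α * p numeraire := by
    induction α using WellFoundedLT.induction with
    | _ α ih =>
      have h0 := geomMeanBase_price_mul hp α 0
      have h1 := geomMeanBase_price_mul hp α 1
      simp only [geomMeanBase, Matrix.cons_val_zero, Matrix.cons_val_one] at h0 h1
      have := monFactors_price_mul α ih hshift rfl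
      rw [h1, ← h0, sq, ← mul_assoc] at this
      exact mul_right_cancel₀ hs.ne' this
  refine ⟨fun i => ?_, fun j => ⟨?_, ?_⟩⟩
  · have := hlin (.poly i)
    rw [← sub_eq_zero, dotProduct_lhs_sub_rhs_poly] at this
    simpa only [hmon, ← mul_assoc, ← Finset.sum_mul, mul_eq_zero, hs.ne', or_false,
      sum_polyCoeff_mul_monomialEval] using this
  · have := hlin (.lower j)
    simp only [lhs, rhs, dotProduct_add, dotProduct_smul, dotProduct_single, mul_one,
      smul_eq_mul, hvar] at this
    nlinarith [hp.nonneg (slackLower j)]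
  · have := hlin (.upper j)
    simp only [lhs, rhs, dotProduct_add, dotProduct_smul, dotProduct_single, mul_one,
      smul_eq_mul, hvar] at this
    nlinarith [hp.nonneg (slackUpper j)]

variable (L U) in
noncomputable def solutionPrice (z : Fin n → ℝ) : Goods f → ℝ
  | numeraire => 1
  | var j => z j
  | slackLower j => z j - L j
  | slackUpper j => U j - z j
  | shifted j => z j + 1
  | mon α => monomialEval (fun j => z j + 1) α
  | pad .. => 1
  | root α => √(monomialEval (fun j => z j + 1) α)
  | link α _ => √(monomialEval (fun j => z j + 1) α)
  | keep .. => 1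

theorem IsBoundedSolution.nonneg (hLU : ∀ j, 0 ≤ L j ∧ L j ≤ U j) {z : Fin n → ℝ}
    (hz : IsBoundedSolution f L U z) (j : Fin n) : 0 ≤ z j :=
  (by exact_mod_cast (hLU j).1 : (0 : ℝ) ≤ L j).trans (hz.2 j).1

theorem solutionPrice_nonneg (hLU : ∀ j, 0 ≤ L j ∧ L j ≤ U j) {z : Fin n → ℝ}
    (hz : IsBoundedSolution f L U z) (g : Goods f) : 0 ≤ solutionPrice L U z g := by
  have hz0 := hz.nonneg hLU
  cases g <;> simp [solutionPrice, hz0, add_nonneg, (hz.2 _).1, (hz.2 _).2, Real.sqrt_nonneg,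
    (monomialEval_shift_pos hz0 _).le]

theorem solutionPrice_geomMeanBase_mul {z : Fin n → ℝ} (hz0 : ∀ j, 0 ≤ z j) (α : Monomial f)
    (r : Fin 2) :
    solutionPrice L U z (geomMeanBase α r).1 * solutionPrice L U z (geomMeanBase α r).2 =
      solutionPrice L U z (root α) ^ 2 := by
  have hρ := monomialEval_shift_pos hz0 (α : Fin n →₀ ℕ)
  rw [show solutionPrice L U z (root α) ^ 2 = monomialEval (fun j => z j + 1) α * 1 ^ 2 by
    simp [solutionPrice, Real.sq_sqrt hρ.le]]
  fin_cases r
  · simp [geomMeanBase, solutionPrice]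
  · exact monFactors_price_mul α (fun β _ => by simp [solutionPrice])
      (fun j => by simp [solutionPrice]) rfl

theorem dotProduct_lhs_eq_rhs_solutionPrice {z : Fin n → ℝ} (hz : IsBoundedSolution f L U z)
    (c : Constraint n m) :
    solutionPrice L U z ⬝ᵥ lhs f c = solutionPrice L U z ⬝ᵥ rhs f L U c := by
  cases c with
  | poly i =>
    rw [← sub_eq_zero, dotProduct_lhs_sub_rhs_poly]
    simp only [solutionPrice]
    rw [sum_polyCoeff_mul_monomialEval]
    exact hz.1 i
  | _ => simp [lhs, rhs, solutionPrice, dotProduct_add]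

theorem isLeontiefEquilibriumPrice_solutionPrice (hLU : ∀ j, 0 ≤ L j ∧ L j ≤ U j)
    {z : Fin n → ℝ} (hz : IsBoundedSolution f L U z) :
    IsLeontiefEquilibriumPrice (market f L U) (solutionPrice L U z) := by
  set P := solutionPrice (f := f) L U z
  have hP := solutionPrice_nonneg hLU hz
  have hroot α : 0 < P (root α) :=
    Real.sqrt_pos.2 (monomialEval_shift_pos (hz.nonneg hLU) α)
  have hpos i : 0 < P ⬝ᵥ (market f L U i).coeff := by
    rcases i with _ | ⟨c, r⟩ | ⟨α, r, k⟩
    · simp [market, P, solutionPrice]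
    · exact linearGadget_dotProduct_coeff_pos hP (lhs_nonneg c) (rhs_nonneg hLU c)
        (fun r => show 0 < P (pad c r) from one_pos) r
    · exact geomMeanGadget_dotProduct_coeff_pos hP (hroot α)
        (show 0 < P (link α r) from hroot α) (show 0 < P (keep α r) from one_pos) k
  have hlin c : excessDemand (linearAgents f L U c) P = 0 :=
    linearGadget_excessDemand_eq_zero (fun r => hpos (.inr (.inl (c, r))))
      (dotProduct_lhs_eq_rhs_solutionPrice hz c)
  have hgm α r : excessDemand (geomMeanAgents α r) P = 0 :=
    geomMeanGadget_excessDemand_eq_zero (hP _) (show 0 < P (keep α r) from one_pos) rfl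
      (by linarith [hroot α, hP (geomMeanBase α r).1])
      (by linarith [hroot α, hP (geomMeanBase α r).2])
      (solutionPrice_geomMeanBase_mul (hz.nonneg hLU) α r)
  have hE : excessDemand (market f L U) P = 0 := by
    rw [excessDemand_market]
    simp [hlin, hgm, P, solutionPrice]
  exact ⟨hP, hpos, fun g => by simp [hE], fun g _ => by simp [hE]⟩

end Equilibrium

end PolyMarket

open PolyMarket in
/-- **Polynomial systems as Leontief market equilibria.**
For every bounded polynomial system `F` there is an exchange market, all of
whose agents have Leontief utilities, with distinguished goods
`G_1, …, G_n, G_s`, such that every equilibrium has `p (G_s) > 0` and the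
equilibrium price vectors normalized by `p (G_s) = 1`, projected onto
`G_1, …, G_n`, are exactly the solutions of `F`; in particular the market has an
equilibrium iff `F` has a solution. -/
theorem poly_system_to_leontief_market (m n : ℕ)
    (f : Fin m → MvPolynomial (Fin n) ℚ) (L U : Fin n → ℚ)
    (hLU : ∀ j, 0 ≤ L j ∧ L j ≤ U j) :
    ∃ (ι G : Type) (_i : Fintype ι) (_g : Fintype G)
      (W : ι → G → ℝ) (Ut : ι → (G → ℝ) → ℝ) (gG : Fin n → G) (gs : G),
      Function.Injective gG ∧ gs ∉ Set.range gG ∧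
      (∀ i j, 0 ≤ W i j) ∧
      (∀ i, ∃ A : G → ℝ, (∀ j, 0 ≤ A j) ∧ A ≠ 0 ∧ Ut i = leontief A) ∧
      (∀ (p : G → ℝ) (x : ι → G → ℝ),
        @IsEquilibrium ι G _i _g W Ut p x → 0 < p gs) ∧
      (∀ z : Fin n → ℝ,
        (∃ (p : G → ℝ) (x : ι → G → ℝ),
            @IsEquilibrium ι G _i _g W Ut p x ∧ ∀ j, z j = p (gG j) / p gs) ↔
          ((∀ i, MvPolynomial.aeval z (f i) = 0) ∧
            ∀ j, (L j : ℝ) ≤ z j ∧ z j ≤ (U j : ℝ))) ∧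
      ((∃ (p : G → ℝ) (x : ι → G → ℝ), @IsEquilibrium ι G _i _g W Ut p x) ↔
        ∃ z : Fin n → ℝ, (∀ i, MvPolynomial.aeval z (f i) = 0) ∧
          ∀ j, (L j : ℝ) ≤ z j ∧ z j ≤ (U j : ℝ)) := by
  have hW i g := (market_nonneg (f := f) hLU i g).1
  have hA i g := (market_nonneg (f := f) hLU i g).2
  have hA0 := market_exists_coeff_pos (f := f) hLU
  have hsol {z : Fin n → ℝ} (hz : IsBoundedSolution f L U z) :=
    (isLeontiefEquilibriumPrice_solutionPrice hLU hz).isEquilibrium hW hA hA0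
  have hfwd {p : Goods f → ℝ} {x} (h : IsEquilibrium (fun i => (market f L U i).endowment)
      (fun i => leontief (market f L U i).coeff) p x) :=
    h.isLeontiefEquilibriumPrice hA hA0
  refine ⟨Trader f, Goods f, inferInstance, inferInstance, fun i => (market f L U i).endowment,
    fun i => leontief (market f L U i).coeff, Good.var, Good.numeraire, fun _ _ h => Good.var.inj h,
    by simp, hW, fun i => ⟨_, hA i, fun h0 => by simpa [h0] using hA0 i, rfl⟩,
    fun p x h => numeraire_price_pos (hfwd h),
    fun z => ⟨?_, fun hz => ⟨_, _, hsol hz, fun j => by simp [solutionPrice]⟩⟩,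
    ⟨fun ⟨p, x, h⟩ => ⟨_, isBoundedSolution_of_isLeontiefEquilibriumPrice (hfwd h)⟩,
      fun ⟨z, hz⟩ => ⟨_, _, hsol hz⟩⟩⟩
  rintro ⟨p, x, h, hz⟩
  rw [funext hz]
  exact isBoundedSolution_of_isLeontiefEquilibriumPrice (hfwd h)
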